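/- (Relation (2.22)) With L = (ℕ, ≤) the natural numbers with their usual order, and 𝒮_nd the family of all subsets of X that are closed and nowhere dense in X, one has the equality of ideals I_{ℕ,𝒮_nd}(X) = J_{ℕ,𝒮_nd}(X); that is, ⋃_{Σ ∈ 𝒮_nd} I_{ℕ,Σ}(X) = ⋃_{Σ ∈ 𝒮_nd} J_{ℕ,Σ}(X) as subsets of (C^∞(X))^ℕ. -/

import Mathlib

/-- The first-order partial derivative of `f` in the coordinate direction `i`. -/
noncomputable def pderiv1 (n : ℕ) (i : Fin n) (f : (Fin n → ℝ) → ℝ) :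
    (Fin n → ℝ) → ℝ :=
  fun x => fderiv ℝ f x (Pi.single i 1)

/-- The multi-index partial derivative `D^p f` for a multi-index `p ∈ ℕⁿ`. -/
noncomputable def Dmulti (n : ℕ) (p : Fin n → ℕ) (f : (Fin n → ℝ) → ℝ) :
    (Fin n → ℝ) → ℝ :=
  (List.finRange n).foldr (fun i g => (pderiv1 n i)^[p i] g) f

/-- Membership in the set `J_{L,Σ}(X)`: a family `w = (w_λ)_{λ∈Λ}` belongs to it iff
for every `x ∈ X∖Σ` there is `λ ∈ Λ` such that for all `μ ≥ λ` and all multi-indices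
`p ∈ ℕⁿ` one has `(D^p w_μ)(x) = 0`. -/
def memJ {n : ℕ} {Λ : Type*} [Preorder Λ] (X Sg : Set (Fin n → ℝ))
    (w : Λ → (Fin n → ℝ) → ℝ) : Prop :=
  ∀ x ∈ X \ Sg, ∃ l : Λ, ∀ m : Λ, l ≤ m → ∀ p : Fin n → ℕ, Dmulti n p (w m) x = 0

/-- `S = (Σ_λ)_{λ∈Λ}` is a representation of `Σ ⊆ X`: each `Σ_λ` is a subset of `X`
with `X∖Σ_λ` open, and `Σ = limsup_{λ∈Λ} Σ_λ = ⋂_{λ∈Λ} ⋃_{μ≥λ} Σ_μ`. -/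
def IsRepresentation {n : ℕ} {Λ : Type*} [Preorder Λ] (X Sg : Set (Fin n → ℝ))
    (S : Λ → Set (Fin n → ℝ)) : Prop :=
  (∀ l : Λ, S l ⊆ X) ∧ (∀ l : Λ, IsOpen (X \ S l)) ∧
    Sg = ⋂ l : Λ, ⋃ m : Λ, ⋃ _ : l ≤ m, S m

/-- Membership in the set `I_{L,Σ,S}(X)`: for every `x ∈ X∖Σ` there is `λ ∈ Λ` such
that for all `μ ≥ λ` there is an open set `Δ_μ` with `x ∈ Δ_μ ⊆ X∖Σ_μ` and
`w_μ = 0` on `Δ_μ`. -/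
def memI {n : ℕ} {Λ : Type*} [Preorder Λ] (X Sg : Set (Fin n → ℝ))
    (S : Λ → Set (Fin n → ℝ)) (w : Λ → (Fin n → ℝ) → ℝ) : Prop :=
  ∀ x ∈ X \ Sg, ∃ l : Λ, ∀ m : Λ, l ≤ m →
    ∃ Δ : Set (Fin n → ℝ), IsOpen Δ ∧ x ∈ Δ ∧ Δ ⊆ X \ S m ∧ ∀ y ∈ Δ, w m y = 0

/-- `Σ` is a closed and nowhere dense subset of `X` (in the subspace topology of the
open set `X ⊆ ℝⁿ`): `Σ ⊆ X`, `X∖Σ` is open, and—`Σ` being relatively closed—nowhere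
density of `Σ` in `X` amounts to density of `X∖Σ` in `X`. -/
def ClosedNwdIn (n : ℕ) (X Sg : Set (Fin n → ℝ)) : Prop :=
  Sg ⊆ X ∧ IsOpen (X \ Sg) ∧ X ⊆ closure (X \ Sg)

/-! If `w_μ` vanishes on a neighbourhood of `x`, so do all its derivatives; hence `I ⊆ J`.
Conversely, let `w ∈ J_Σ` and let `F_ν ⊆ X ∖ Σ` be the set of points at which every `w_μ`,
`μ ≥ ν`, is flat. The `F_ν` are closed in `X ∖ Σ` and cover it, so by Baire's theorem the union
`Ω` of their interiors is dense in `X ∖ Σ`, and `X ∖ Ω` is again closed and nowhere dense in `X`.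
Each point of `Ω` lies in some `interior F_ν`, on which `w_μ = 0` for all `μ ≥ ν`. -/

open Set Topology

section Baire

variable {α ι : Type*} [TopologicalSpace α] [BaireSpace α] [Countable ι]

theorem IsOpen.subset_closure_iUnion_interior {V : Set α} (hV : IsOpen V) {E : ι → Set α}
    (hE : ∀ i, IsOpen (V \ E i)) (hcover : V ⊆ ⋃ i, E i) :
    V ⊆ closure (⋃ i, interior (E i)) := by
  cases isEmpty_or_nonempty ι
  · simp_all
  have hclosed : ∀ i, IsClosed (E i ∪ Vᶜ) := fun i => by
    rw [← isOpen_compl_iff, compl_union, compl_compl, ← sdiff_eq_compl_inter]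
    exact hE i
  have hunion : ⋃ i, (E i ∪ Vᶜ) = univ := by
    refine eq_univ_of_forall fun x => ?_
    by_cases hx : x ∈ V
    · obtain ⟨i, hi⟩ := mem_iUnion.1 (hcover hx)
      exact mem_iUnion.2 ⟨i, Or.inl hi⟩
    · exact mem_iUnion.2 ⟨Classical.arbitrary ι, Or.inr hx⟩
  have hinterior : ∀ i, interior (E i ∪ Vᶜ) ∩ V ⊆ interior (E i) := fun i =>
    (isOpen_interior.inter hV).subset_interior_iff.2 fun x hx =>
      (interior_subset hx.1).resolve_right (not_not_intro hx.2)
  intro x hx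
  rw [mem_closure_iff]
  intro U hU hxU
  obtain ⟨y, hy, hyU, hyV⟩ := (dense_iUnion_interior_of_closed hclosed hunion).exists_mem_open
    (hU.inter hV) ⟨x, hxU, hx⟩
  obtain ⟨i, hi⟩ := mem_iUnion.1 hy
  exact ⟨y, hyU, mem_iUnion.2 ⟨i, hinterior i ⟨hi, hyV⟩⟩⟩

end Baire

section Derivatives

variable {n : ℕ}

theorem Dmulti_induction {P : ((Fin n → ℝ) → ℝ) → Prop}
    (hP : ∀ i g, P g → P (pderiv1 n i g)) (p : Fin n → ℕ) {f : (Fin n → ℝ) → ℝ} (hf : P f) :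
    P (Dmulti n p f) := by
  unfold Dmulti
  induction List.finRange n with
  | nil => exact hf
  | cons i t ih => exact Function.Iterate.rec P ih (hP i) (p i)

@[simp]
theorem Dmulti_zero (f : (Fin n → ℝ) → ℝ) : Dmulti n 0 f = f := by
  simp [Dmulti]

theorem ContDiffOn.Dmulti {V : Set (Fin n → ℝ)} (hV : IsOpen V) {f : (Fin n → ℝ) → ℝ}
    (hf : ContDiffOn ℝ (⊤ : ℕ∞) f V) (p : Fin n → ℕ) :
    ContDiffOn ℝ (⊤ : ℕ∞) (Dmulti n p f) V :=
  Dmulti_induction (P := fun g => ContDiffOn ℝ (⊤ : ℕ∞) g V)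
    (fun _ _ hg => (hg.fderiv_of_isOpen hV le_rfl).clm_apply contDiffOn_const) p hf

theorem Set.EqOn.Dmulti_eq_zero {Δ : Set (Fin n → ℝ)} (hΔ : IsOpen Δ) {f : (Fin n → ℝ) → ℝ}
    (hf : EqOn f 0 Δ) (p : Fin n → ℕ) : EqOn (Dmulti n p f) 0 Δ := by
  refine Dmulti_induction (P := fun g => EqOn g 0 Δ) (fun _ g hg y hy => ?_) p hf
  have hg0 : g =ᶠ[𝓝 y] fun _ => 0 := Filter.eventuallyEq_of_mem (hΔ.mem_nhds hy) hg
  simp [pderiv1, hg0.fderiv_eq]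

end Derivatives

section FlatLocus

variable {n : ℕ}

def flatLocus (w : ℕ → (Fin n → ℝ) → ℝ) (ν : ℕ) : Set (Fin n → ℝ) :=
  {x | ∀ μ, ν ≤ μ → ∀ p : Fin n → ℕ, Dmulti n p (w μ) x = 0}

theorem isOpen_diff_flatLocus {V : Set (Fin n → ℝ)} (hV : IsOpen V) {w : ℕ → (Fin n → ℝ) → ℝ}
    (hw : ∀ μ, ContDiffOn ℝ (⊤ : ℕ∞) (w μ) V) (ν : ℕ) : IsOpen (V \ flatLocus w ν) := by
  have h : V \ flatLocus w ν = ⋃ μ, ⋃ (_ : ν ≤ μ), ⋃ p, V ∩ Dmulti n p (w μ) ⁻¹' {0}ᶜ := by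
    ext x
    simp [flatLocus]
  rw [h]
  exact isOpen_iUnion fun μ => isOpen_iUnion fun _ => isOpen_iUnion fun p =>
    ((hw μ).Dmulti hV p).continuousOn.isOpen_inter_preimage hV isOpen_compl_singleton

end FlatLocus

theorem memJ_of_memI {n : ℕ} {Λ : Type*} [Preorder Λ] {X Sg : Set (Fin n → ℝ)}
    {S : Λ → Set (Fin n → ℝ)} {w : Λ → (Fin n → ℝ) → ℝ} (h : memI X Sg S w) : memJ X Sg w := by
  intro x hx
  obtain ⟨l, hl⟩ := h x hx
  refine ⟨l, fun m hm p => ?_⟩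
  obtain ⟨Δ, hΔ, hxΔ, -, hwΔ⟩ := hl m hm
  exact EqOn.Dmulti_eq_zero hΔ hwΔ p hxΔ

theorem closedNwdIn_diff {n : ℕ} {X Ω : Set (Fin n → ℝ)} (hΩ : IsOpen Ω) (hΩX : Ω ⊆ X)
    (hXΩ : X ⊆ closure Ω) : ClosedNwdIn n X (X \ Ω) := by
  rw [ClosedNwdIn, sdiff_sdiff_cancel_left hΩX]
  exact ⟨sdiff_subset, hΩ, hXΩ⟩

theorem exists_memI_of_memJ {n : ℕ} {X Sg : Set (Fin n → ℝ)} {w : ℕ → (Fin n → ℝ) → ℝ}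
    (hw : ∀ ν, ContDiffOn ℝ (⊤ : ℕ∞) (w ν) X) (hSg : ClosedNwdIn n X Sg) (hJ : memJ X Sg w) :
    ∃ Sg' : Set (Fin n → ℝ), ClosedNwdIn n X Sg' ∧ memI X Sg' (fun _ : ℕ => Sg') w := by
  obtain ⟨-, hV, hXV⟩ := hSg
  set E : ℕ → Set (Fin n → ℝ) := fun ν => (X \ Sg) ∩ flatLocus w ν
  set Ω := ⋃ ν, interior (E ν)
  have hΩX : Ω ⊆ X := iUnion_subset fun ν =>
    interior_subset.trans (inter_subset_left.trans sdiff_subset)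
  have hVΩ : X \ Sg ⊆ closure Ω := by
    refine hV.subset_closure_iUnion_interior (fun ν => ?_) fun x hx => ?_
    · rw [sdiff_self_inter]
      exact isOpen_diff_flatLocus hV (fun μ => (hw μ).mono sdiff_subset) ν
    · obtain ⟨ν, hν⟩ := hJ x hx
      exact mem_iUnion.2 ⟨ν, hx, hν⟩
  refine ⟨X \ Ω, closedNwdIn_diff (isOpen_iUnion fun _ => isOpen_interior) hΩX
    (hXV.trans (closure_minimal hVΩ isClosed_closure)), ?_⟩
  simp only [memI, sdiff_sdiff_cancel_left hΩX]
  intro x hx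
  obtain ⟨ν, hxν⟩ := mem_iUnion.1 hx
  refine ⟨ν, fun m hm => ⟨interior (E ν), isOpen_interior, hxν,
    subset_iUnion (fun ν => interior (E ν)) ν, fun y hy => ?_⟩⟩
  simpa using (interior_subset hy).2 m hm 0

theorem stmt16_general (n : ℕ) (X : Set (Fin n → ℝ))
    (w : ℕ → (Fin n → ℝ) → ℝ) (hw : ∀ ν : ℕ, ContDiffOn ℝ (⊤ : ℕ∞) (w ν) X) :
    (∃ Sg : Set (Fin n → ℝ), ClosedNwdIn n X Sg
        ∧ memI X Sg (fun _ : ℕ => Sg) w)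
    ↔ (∃ Sg : Set (Fin n → ℝ), ClosedNwdIn n X Sg ∧ memJ X Sg w) :=
  ⟨fun ⟨Sg, hSg, hI⟩ => ⟨Sg, hSg, memJ_of_memI hI⟩,
    fun ⟨_, hSg, hJ⟩ => exists_memI_of_memJ hw hSg hJ⟩

/-- relation (2.22): with `L = (ℕ, ≤)` and `𝒮_nd` the family of all
closed nowhere dense subsets of `X`, one has `I_{ℕ,𝒮_nd}(X) = J_{ℕ,𝒮_nd}(X)` as subsets
of `(C^∞(X))^ℕ`, where for closed `Σ` the ideal `I_{ℕ,Σ}(X)` is computed via the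
constant representation `Σ_ν = Σ`. -/
theorem stmt16 (n : ℕ) (X : Set (Fin n → ℝ)) (hX : IsOpen X) (hXne : X.Nonempty)
    (w : ℕ → (Fin n → ℝ) → ℝ) (hw : ∀ ν : ℕ, ContDiffOn ℝ (⊤ : ℕ∞) (w ν) X) :
    (∃ Sg : Set (Fin n → ℝ), ClosedNwdIn n X Sg
        ∧ memI X Sg (fun _ : ℕ => Sg) w)
    ↔ (∃ Sg : Set (Fin n → ℝ), ClosedNwdIn n X Sg ∧ memJ X Sg w) :=
  stmt16_general n X w hw
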